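/- (Expected-squared-norm bounds for a Gaussian T-product tensor series.) Let A₁, …, Aₙ be fixed Hermitian block-circulant matrices in ℂ^{(mp)×(mp)} (block-circulant representations of Hermitian T-product tensors in ℂ^{m×m×p}), let α₁, …, αₙ be independent standard Gaussian random variables, set X := Σᵢ αᵢ Aᵢ and σ² := ‖Σᵢ Aᵢ²‖. Then σ² ≤ E[ ‖X‖² ] ≤ 4 m p σ². -/

import Mathlib

open MeasureTheory ProbabilityTheory Matrix
open scoped ComplexOrder

noncomputable section

/-- Entrywise measurable space on complex matrices. -/
instance matrixMeasurableSpace {m n : Type*} : MeasurableSpace (Matrix m n ℂ) :=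
  (inferInstance : MeasurableSpace (m → n → ℂ))

/-- `M` is block circulant: shifting both frontal indices by `d` leaves entries unchanged,
i.e. `M ((i,k),(j,l))` depends only on `i`, `j` and `(k - l) mod p`. -/
def IsBlockCirculant {m n p : ℕ} [NeZero p]
    (M : Matrix (Fin m × Fin p) (Fin n × Fin p) ℂ) : Prop :=
  ∀ (i : Fin m) (j : Fin n) (k l d : Fin p), M (i, k + d) (j, l + d) = M (i, k) (j, l)

/-- Spectral norm (largest singular value) of a complex matrix, as the operator norm of the
associated Euclidean linear map. -/
def specNorm {m n : Type*} [Fintype m] [Fintype n] [DecidableEq n] (A : Matrix m n ℂ) : ℝ :=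
  ‖LinearMap.toContinuousLinearMap (Matrix.toEuclideanLin A)‖

/-- Largest real eigenvalue of a square complex matrix. -/
def lambdaMax {n : Type*} [Fintype n] (A : Matrix n n ℂ) : ℝ :=
  sSup {r : ℝ | ∃ v : n → ℂ, v ≠ 0 ∧ A.mulVec v = (r : ℂ) • v}

/-- Smallest real eigenvalue of a square complex matrix. -/
def lambdaMin {n : Type*} [Fintype n] (A : Matrix n n ℂ) : ℝ :=
  sInf {r : ℝ | ∃ v : n → ℂ, v ≠ 0 ∧ A.mulVec v = (r : ℂ) • v}

/-- Entrywise expectation of a random matrix. -/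
def eMat {Ω : Type*} [MeasurableSpace Ω] (μ : Measure Ω) {m n : Type*}
    (X : Ω → Matrix m n ℂ) : Matrix m n ℂ :=
  Matrix.of fun i j => ∫ ω, X ω i j ∂μ

/-- `β` is a Rademacher random variable: it takes the values `1` and `-1`, each with
probability `1/2`. -/
def IsRademacher {Ω : Type*} [MeasurableSpace Ω] (μ : Measure Ω) (β : Ω → ℝ) : Prop :=
  Measurable β ∧ μ {ω | β ω = 1} = 1/2 ∧ μ {ω | β ω = -1} = 1/2

/-- `α` is a standard Gaussian random variable. -/
def IsStdGaussian {Ω : Type*} [MeasurableSpace Ω] (μ : Measure Ω) (α : Ω → ℝ) : Prop :=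
  Measurable α ∧ Measure.map α μ = gaussianReal 0 1

/-- Binary information divergence `D(c‖d)`. -/
def binKL (c d : ℝ) : ℝ :=
  c * Real.log (c / d) + (1 - c) * Real.log ((1 - c) / (1 - d))

/-!
Orthonormality of the Gaussian coefficients gives `E[X²] = Σᵢ Aᵢ²`, as a Bochner integral in
the Banach algebra of matrices with the spectral norm. Since `X` is Hermitian, `‖X‖² = ‖X²‖`, so
the lower bound is the triangle inequality `‖E[X²]‖ ≤ E‖X²‖`. For the upper bound, the spectral
norm is dominated by the Frobenius norm, `‖X‖² ≤ Re tr X²`, and the trace commutes with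
expectation, so `E‖X‖² ≤ Re tr Σᵢ Aᵢ² ≤ m p σ²`, each diagonal entry being bounded by the
spectral norm.
-/

open scoped NNReal Matrix.Norms.L2Operator

namespace ProbabilityTheory

variable {Ω : Type*} [MeasurableSpace Ω] {μ : Measure Ω}

theorem IsStdGaussian.hasLaw {α : Ω → ℝ} (h : IsStdGaussian μ α) :
    HasLaw α (gaussianReal 0 1) μ :=
  ⟨h.1.aemeasurable, h.2⟩

section GaussianMoments

variable {X Y : Ω → ℝ} {m m' : ℝ} {v v' : ℝ≥0}

theorem HasLaw.memLp_of_gaussianReal (hX : HasLaw X (gaussianReal m v) μ) (p : ℝ≥0) :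
    MemLp X p μ := by
  have hid : MemLp id p (μ.map X) := hX.map_eq ▸ memLp_id_gaussianReal p
  exact (memLp_map_measure_iff hid.aestronglyMeasurable hX.aemeasurable).mp hid

theorem HasLaw.integral_of_gaussianReal (hX : HasLaw X (gaussianReal m v) μ) :
    ∫ ω, X ω ∂μ = m := by
  rw [hX.integral_eq, integral_id_gaussianReal]

theorem HasLaw.variance_of_gaussianReal (hX : HasLaw X (gaussianReal m v) μ) :
    Var[X; μ] = v := by
  rw [hX.variance_eq, variance_id_gaussianReal]

theorem HasLaw.integrable_mul_of_gaussianReal (hX : HasLaw X (gaussianReal m v) μ)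
    (hY : HasLaw Y (gaussianReal m' v') μ) : Integrable (fun ω => X ω * Y ω) μ :=
  (hX.memLp_of_gaussianReal 2).integrable_mul (p := 2) (q := 2) (hY.memLp_of_gaussianReal 2)

end GaussianMoments

theorem iIndepFun.integral_mul_of_hasLaw_stdGaussian [IsProbabilityMeasure μ] {ι : Type*}
    [DecidableEq ι] {ξ : ι → Ω → ℝ} (hind : iIndepFun ξ μ)
    (hξ : ∀ i, HasLaw (ξ i) (gaussianReal 0 1) μ) (i j : ι) :
    ∫ ω, ξ i ω * ξ j ω ∂μ = if i = j then 1 else 0 := by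
  have hL2 (k : ι) : MemLp (ξ k) 2 μ := by exact_mod_cast (hξ k).memLp_of_gaussianReal 2
  have hcov : ∫ ω, ξ i ω * ξ j ω ∂μ = cov[ξ i, ξ j; μ] := by
    rw [covariance_eq_sub (hL2 i) (hL2 j), (hξ i).integral_of_gaussianReal, zero_mul, sub_zero]
    rfl
  split_ifs with hij
  · subst hij
    rw [hcov, covariance_self (hξ i).aemeasurable, (hξ i).variance_of_gaussianReal,
      NNReal.coe_one]
  · rw [hcov, (hind.indepFun hij).covariance_eq_zero (hL2 i) (hL2 j)]

end ProbabilityTheory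

namespace Matrix

variable {𝕜 : Type*} [RCLike 𝕜] {m n : Type*} [Fintype m] [Fintype n]

theorem norm_entry_le_l2_opNorm [DecidableEq n] (A : Matrix m n 𝕜) (i : m) (j : n) :
    ‖A i j‖ ≤ ‖A‖ :=
  calc ‖A i j‖ = ‖(EuclideanSpace.equiv m 𝕜).symm (A *ᵥ EuclideanSpace.single j 1) i‖ :=
        by simp
    _ ≤ ‖(EuclideanSpace.equiv m 𝕜).symm (A *ᵥ EuclideanSpace.single j 1)‖ :=
        PiLp.norm_apply_le _ i
    _ ≤ ‖A‖ * ‖EuclideanSpace.single j (1 : 𝕜)‖ := l2_opNorm_mulVec A _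
    _ = ‖A‖ := by simp

theorem l2_opNorm_sq_le_sum_norm_sq [DecidableEq n] (A : Matrix m n 𝕜) :
    ‖A‖ ^ 2 ≤ ∑ i, ∑ j, ‖A i j‖ ^ 2 := by
  set S := ∑ i, ∑ j, ‖A i j‖ ^ 2
  suffices ‖A‖ ≤ √S by
    calc ‖A‖ ^ 2 ≤ √S ^ 2 := by gcongr
      _ = S := Real.sq_sqrt (by positivity)
  refine ContinuousLinearMap.opNorm_le_bound _ (Real.sqrt_nonneg _) fun x => ?_
  refine (sq_le_sq₀ (norm_nonneg _) (by positivity)).mp ?_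
  rw [mul_pow, Real.sq_sqrt (by positivity), EuclideanSpace.norm_sq_eq,
    EuclideanSpace.norm_sq_eq, Finset.sum_mul]
  gcongr with i
  calc ‖∑ j, A i j * x j‖ ^ 2 ≤ (∑ j, ‖A i j‖ * ‖x j‖) ^ 2 := by
        gcongr
        exact (norm_sum_le _ _).trans_eq (by simp only [norm_mul])
    _ ≤ (∑ j, ‖A i j‖ ^ 2) * ∑ j, ‖x j‖ ^ 2 := Finset.sum_mul_sq_le_sq_mul_sq _ _ _

theorem sum_norm_sq_eq_re_trace_conjTranspose_mul_self (A : Matrix m n 𝕜) :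
    ∑ i, ∑ j, ‖A i j‖ ^ 2 = RCLike.re (Aᴴ * A).trace := by
  simp only [trace, diag, mul_apply, conjTranspose_apply, map_sum, RCLike.star_def,
    RCLike.conj_mul]
  rw [Finset.sum_comm]
  simp only [← RCLike.ofReal_pow, RCLike.ofReal_re]

theorem re_trace_le_card_mul_l2_opNorm [DecidableEq n] (A : Matrix n n 𝕜) :
    RCLike.re A.trace ≤ Fintype.card n * ‖A‖ := by
  rw [trace, map_sum, ← nsmul_eq_mul]
  refine Finset.sum_le_card_nsmul _ _ _ fun i _ => ?_
  exact (RCLike.re_le_norm _).trans (norm_entry_le_l2_opNorm A i i)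

namespace IsHermitian

variable [DecidableEq n] {A : Matrix n n 𝕜}

theorem l2_opNorm_sq (hA : A.IsHermitian) : ‖A ^ 2‖ = ‖A‖ ^ 2 := by
  rw [sq, sq, ← l2_opNorm_conjTranspose_mul_self, hA.eq]

theorem l2_opNorm_sq_le_re_trace_sq (hA : A.IsHermitian) :
    ‖A‖ ^ 2 ≤ RCLike.re (A ^ 2).trace :=
  calc ‖A‖ ^ 2 ≤ ∑ i, ∑ j, ‖A i j‖ ^ 2 := l2_opNorm_sq_le_sum_norm_sq A
    _ = RCLike.re (A ^ 2).trace := by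
      rw [sum_norm_sq_eq_re_trace_conjTranspose_mul_self, hA.eq, sq]

end IsHermitian

end Matrix

theorem specNorm_eq_l2_opNorm {m n : Type*} [Fintype m] [Fintype n] [DecidableEq n]
    (A : Matrix m n ℂ) : specNorm A = ‖A‖ :=
  rfl

section SecondMoment

variable {ι R A : Type*} [Fintype ι]

theorem sum_smul_sq [CommSemiring R] [Semiring A] [Algebra R A] (c : ι → R) (a : ι → A) :
    (∑ i, c i • a i) ^ 2 = ∑ i, ∑ j, (c i * c j) • (a i * a j) := by
  simp only [sq, Finset.sum_mul_sum, smul_mul_smul_comm]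

variable {Ω : Type*} [MeasurableSpace Ω] {μ : Measure Ω} [NormedRing A] [NormedAlgebra ℝ A]
  {ξ : ι → Ω → ℝ}

theorem integrable_sum_smul_sq (hξ : ∀ i j, Integrable (fun ω => ξ i ω * ξ j ω) μ)
    (a : ι → A) : Integrable (fun ω => (∑ i, ξ i ω • a i) ^ 2) μ := by
  simp only [sum_smul_sq]
  exact integrable_finsetSum _ fun i _ => integrable_finsetSum _ fun j _ =>
    (hξ i j).smul_const _

theorem integral_sum_smul_sq [DecidableEq ι] [CompleteSpace A]
    (hξ : ∀ i j, Integrable (fun ω => ξ i ω * ξ j ω) μ)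
    (horth : ∀ i j, ∫ ω, ξ i ω * ξ j ω ∂μ = if i = j then 1 else 0) (a : ι → A) :
    ∫ ω, (∑ i, ξ i ω • a i) ^ 2 ∂μ = ∑ i, a i ^ 2 := by
  simp only [sum_smul_sq]
  rw [integral_finsetSum _ fun i _ => integrable_finsetSum _ fun j _ => (hξ i j).smul_const _]
  refine Finset.sum_congr rfl fun i _ => ?_
  rw [integral_finsetSum _ fun j _ => (hξ i j).smul_const _]
  simp [integral_smul_const, horth, sq]

end SecondMoment

theorem gaussian_series_expected_sq_norm_general {m p : ℕ} {Ω : Type*}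
    [MeasurableSpace Ω] (μ : Measure Ω) [IsProbabilityMeasure μ] {n : ℕ}
    (A : Fin n → Matrix (Fin m × Fin p) (Fin m × Fin p) ℂ)
    (hAherm : ∀ i, (A i).IsHermitian)
    (α : Fin n → Ω → ℝ) (hα : ∀ i, IsStdGaussian μ (α i))
    (hind : iIndepFun α μ)
    (σ2 : ℝ) (hσ2 : σ2 = specNorm (∑ i, A i ^ 2)) :
    σ2 ≤ ∫ ω, specNorm (∑ i, ((α i ω : ℝ) : ℂ) • A i) ^ 2 ∂μ ∧
      ∫ ω, specNorm (∑ i, ((α i ω : ℝ) : ℂ) • A i) ^ 2 ∂μ ≤ 4 * m * p * σ2 := by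
  have hlaw i := (hα i).hasLaw
  have hint i j := (hlaw i).integrable_mul_of_gaussianReal (hlaw j)
  have hsq := integrable_sum_smul_sq hint A
  have hE := integral_sum_smul_sq hint (hind.integral_mul_of_hasLaw_stdGaussian hlaw) A
  have hherm ω : (∑ i, α i ω • A i).IsHermitian :=
    isSelfAdjoint_sum _ fun i _ => (hAherm i).smul (IsSelfAdjoint.all (α i ω))
  simp only [specNorm_eq_l2_opNorm, Complex.coe_smul] at hσ2 ⊢
  let reTrace : Matrix (Fin m × Fin p) (Fin m × Fin p) ℂ →L[ℝ] ℝ :=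
    Complex.reCLM.comp (Matrix.traceLinearMap _ ℝ ℂ).toContinuousLinearMap
  constructor
  · calc σ2 = ‖∫ ω, (∑ i, α i ω • A i) ^ 2 ∂μ‖ := by rw [hE, hσ2]
      _ ≤ ∫ ω, ‖(∑ i, α i ω • A i) ^ 2‖ ∂μ := norm_integral_le_integral_norm _
      _ = ∫ ω, ‖∑ i, α i ω • A i‖ ^ 2 ∂μ := by simp only [(hherm _).l2_opNorm_sq]
  · have hσ2_nonneg : 0 ≤ σ2 := hσ2 ▸ norm_nonneg _
    calc ∫ ω, ‖∑ i, α i ω • A i‖ ^ 2 ∂μ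
          ≤ ∫ ω, reTrace ((∑ i, α i ω • A i) ^ 2) ∂μ := by
          refine integral_mono ?_ (reTrace.integrable_comp hsq) fun ω =>
            (hherm ω).l2_opNorm_sq_le_re_trace_sq
          simpa only [(hherm _).l2_opNorm_sq] using hsq.norm
      _ = reTrace (∑ i, A i ^ 2) := by rw [reTrace.integral_comp_comm hsq, hE]
      _ ≤ m * p * σ2 := by
          have := Matrix.re_trace_le_card_mul_l2_opNorm (∑ i, A i ^ 2)
          rwa [Fintype.card_prod, Fintype.card_fin, Fintype.card_fin, Nat.cast_mul, ← hσ2]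
            at this
      _ ≤ 4 * m * p * σ2 := by
          have : (0 : ℝ) ≤ m * p := by positivity
          nlinarith

/-- Expected-squared-norm bounds for a Gaussian T-product tensor series:
`σ² ≤ E[‖X‖²] ≤ 4 m p σ²`, where `X = Σᵢ αᵢ Aᵢ` and `σ² = ‖Σᵢ Aᵢ²‖`. -/
theorem gaussian_series_expected_sq_norm {m p : ℕ} [NeZero p] {Ω : Type*}
    [MeasurableSpace Ω] (μ : Measure Ω) [IsProbabilityMeasure μ] {n : ℕ}
    (A : Fin n → Matrix (Fin m × Fin p) (Fin m × Fin p) ℂ)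
    (hAherm : ∀ i, (A i).IsHermitian) (hAcirc : ∀ i, IsBlockCirculant (A i))
    (α : Fin n → Ω → ℝ) (hα : ∀ i, IsStdGaussian μ (α i))
    (hind : iIndepFun α μ)
    (σ2 : ℝ) (hσ2 : σ2 = specNorm (∑ i, A i ^ 2)) :
    σ2 ≤ ∫ ω, specNorm (∑ i, ((α i ω : ℝ) : ℂ) • A i) ^ 2 ∂μ ∧
      ∫ ω, specNorm (∑ i, ((α i ω : ℝ) : ℂ) • A i) ^ 2 ∂μ ≤ 4 * m * p * σ2 :=
  gaussian_series_expected_sq_norm_general μ A hAherm α hα hind σ2 hσ2
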